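/- Let γ(τ) = (e^{-τ}, x(τ)) be a causal curve in the Kasner spacetime with metric g = -e^{-2τ}dτ⊗dτ + Σᵢ e^{-2p_iτ} dxⁱ⊗dxⁱ, where each p_i < 1. Then |ẋⁱ(τ)| ≤ e^{-(1-p_i)τ} for all τ, and consequently for τ_j ≤ τ_k, |xⁱ(τ_k) - xⁱ(τ_j)| ≤ (1/(1-p_i)) e^{-(1-p_i)τ_j}. In particular, x(τ) converges to a limit point in T³ as τ → ∞. -/

import Mathlib

open Real Filter

/-! The causality condition bounds each term of the spatial sum by the time term, giving
`|ẋⁱ| ≤ e^{-(1-pᵢ)τ}`. Since `1 - pᵢ > 0` this speed is integrable at `+∞`, with tail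
`e^{-(1-pᵢ)τ}/(1-pᵢ)`, so each coordinate is Cauchy as `τ → ∞`; its real limit, reduced mod
`2π`, is the limit point in `T³`. -/

theorem abs_le_exp_of_causal {ι : Type*} [Fintype ι] (p v : ι → ℝ) (τ : ℝ)
    (hcausal : -exp (-2 * τ) + ∑ i, exp (-2 * p i * τ) * v i ^ 2 ≤ 0) (i : ι) :
    |v i| ≤ exp (-(1 - p i) * τ) := by
  have hterm : exp (-2 * p i * τ) * v i ^ 2 ≤ exp (-2 * τ) := by
    have := Finset.single_le_sum (f := fun j => exp (-2 * p j * τ) * v j ^ 2)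
      (fun j _ => by positivity) (Finset.mem_univ i)
    linarith
  refine abs_le_of_sq_le_sq ?_ (exp_pos _).le
  calc v i ^ 2 ≤ exp (-2 * τ) / exp (-2 * p i * τ) := by
        rw [le_div_iff₀ (exp_pos _)]; linarith
    _ = exp (-(1 - p i) * τ) ^ 2 := by
        rw [← exp_sub, sq, ← exp_add]; ring_nf

theorem abs_sub_le_sub_of_abs_deriv_le {f f' g g' : ℝ → ℝ}
    (hf : ∀ t, HasDerivAt f (f' t) t) (hg : ∀ t, HasDerivAt g (g' t) t)
    (hbound : ∀ t, |f' t| ≤ g' t) {s t : ℝ} (hst : s ≤ t) :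
    |f t - f s| ≤ g t - g s := by
  have hadd := monotone_of_hasDerivAt_nonneg (fun u => (hg u).add (hf u))
    fun u => show (0 : ℝ) ≤ _ by linarith [neg_abs_le (f' u), hbound u]
  have hsub := monotone_of_hasDerivAt_nonneg (fun u => (hg u).sub (hf u))
    fun u => show (0 : ℝ) ≤ _ by linarith [le_abs_self (f' u), hbound u]
  have h₁ := hadd hst
  have h₂ := hsub hst
  simp only [Pi.add_apply, Pi.sub_apply] at h₁ h₂
  rw [abs_le]
  constructor <;> linarith

theorem abs_sub_le_of_abs_deriv_le_exp {f f' : ℝ → ℝ} {a : ℝ} (ha : 0 < a)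
    (hf : ∀ t, HasDerivAt f (f' t) t) (hbound : ∀ t, |f' t| ≤ exp (-a * t))
    {s t : ℝ} (hst : s ≤ t) :
    |f t - f s| ≤ 1 / a * exp (-a * s) := by
  have hg : ∀ u, HasDerivAt (fun u => -(1 / a) * exp (-a * u)) (exp (-a * u)) u := by
    intro u
    refine ((((hasDerivAt_id u).const_mul (-a)).exp).const_mul (-(1 / a))).congr_deriv ?_
    simp only [id]
    field_simp
  calc |f t - f s| ≤ -(1 / a) * exp (-a * t) - -(1 / a) * exp (-a * s) :=
        abs_sub_le_sub_of_abs_deriv_le hf hg hbound hst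
    _ ≤ 1 / a * exp (-a * s) := by
        have : 0 ≤ 1 / a * exp (-a * t) := by positivity
        linarith

theorem tendsto_one_div_mul_exp_neg_mul_atTop {a : ℝ} (ha : 0 < a) :
    Tendsto (fun s => 1 / a * exp (-a * s)) atTop (nhds 0) := by
  have h := (tendsto_exp_atBot.comp
    (tendsto_id.const_mul_atTop_of_neg (neg_neg_of_pos ha))).const_mul (1 / a)
  simpa using h

theorem causal_curve_spatial_convergence (p : Fin 3 → ℝ) (hp : ∀ i, p i < 1)
    (x x' : ℝ → Fin 3 → ℝ)
    (hx : ∀ τ : ℝ, ∀ i, HasDerivAt (fun s => x s i) (x' τ i) τ)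
    (hcausal : ∀ τ : ℝ,
      -Real.exp (-2 * τ) + ∑ i, Real.exp (-2 * p i * τ) * (x' τ i) ^ 2 ≤ 0) :
    (∀ τ : ℝ, ∀ i, |x' τ i| ≤ Real.exp (-(1 - p i) * τ)) ∧
    (∀ i, ∀ τj τk : ℝ, τj ≤ τk →
      |x τk i - x τj i| ≤ (1 / (1 - p i)) * Real.exp (-(1 - p i) * τj)) ∧
    (∃ q : Fin 3 → AddCircle (2 * Real.pi),
      Tendsto (fun τ => fun i => ((x τ i : ℝ) : AddCircle (2 * Real.pi))) atTop (nhds q)) := by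
  have hspeed : ∀ τ i, |x' τ i| ≤ exp (-(1 - p i) * τ) :=
    fun τ => abs_le_exp_of_causal p (x' τ) τ (hcausal τ)
  have hgap : ∀ i, 0 < 1 - p i := fun i => sub_pos.2 (hp i)
  have hdisp : ∀ i, ∀ τj τk : ℝ, τj ≤ τk →
      |x τk i - x τj i| ≤ 1 / (1 - p i) * exp (-(1 - p i) * τj) :=
    fun i _ _ => abs_sub_le_of_abs_deriv_le_exp (hgap i) (fun τ => hx τ i) (fun τ => hspeed τ i)
  refine ⟨hspeed, hdisp, ?_⟩
  have hcauchy : ∀ i, CauchySeq fun τ => x τ i := fun i =>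
    cauchySeq_of_le_tendsto_0' _ (fun τj τk h => by rw [dist_comm]; exact hdisp i τj τk h)
      (tendsto_one_div_mul_exp_neg_mul_atTop (hgap i))
  choose L hL using fun i => cauchySeq_tendsto_of_complete (hcauchy i)
  exact ⟨fun i => L i, tendsto_pi_nhds.2 fun i => (continuous_quotient_mk'.tendsto _).comp (hL i)⟩
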